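/- arXiv:1902.08055 — 4 statements merged into one kernel-verified Lean document; each statement's English description precedes it below -/
import Mathlib

section
/- For every formula schema F ∈ FS₀ (a formula schema containing no formula variables) and every parameter assignment σ, the evaluation σ(F)↓_o lies in F₀, i.e., it is an ordinary quantifier-free first-order formula containing no defined symbols and no parameters. -/
namespace Schematic

/-- Numeric terms `T^ω`: built from `0̄`, parameters (indexed by `ℕ`), the successor `s`, and
defined numeric function symbols `f̂ ∈ F̂_ω` (the symbol type `F`), where `f̂ ∈ F` has arity
`ar f + 1`. -/
inductive NTerm (F : Type) (ar : F → ℕ) : Type where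
  | zero : NTerm F ar
  | param : ℕ → NTerm F ar
  | succ : NTerm F ar → NTerm F ar
  | defd : (f : F) → (Fin (ar f + 1) → NTerm F ar) → NTerm F ar

namespace NTerm

variable {F : Type} {ar : F → ℕ}

/-- The numeral `s^β(0̄)`. -/
def ofNat (F : Type) (ar : F → ℕ) : ℕ → NTerm F ar
  | 0 => zero
  | n + 1 => succ (ofNat F ar n)

/-- Homomorphic substitution of parameters. -/
def subst (σ : ℕ → NTerm F ar) : NTerm F ar → NTerm F ar
  | zero => zero
  | param n => σ n
  | succ t => succ (t.subst σ)
  | defd f ts => defd f fun i => (ts i).subst σ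

/-- The parameter `n` occurs in the term. -/
def HasParam (n : ℕ) : NTerm F ar → Prop
  | zero => False
  | param m => m = n
  | succ t => t.HasParam n
  | defd _ ts => ∃ i, (ts i).HasParam n

/-- The defined symbol `g` occurs in the term. -/
def HasSymb (g : F) : NTerm F ar → Prop
  | zero => False
  | param _ => False
  | succ t => t.HasSymb g
  | defd f ts => f = g ∨ ∃ i, (ts i).HasSymb g

/-- The term contains no defined function symbols (i.e. it belongs to `T^ω₀`). -/
def NoDefd : NTerm F ar → Prop
  | zero => True
  | param _ => True
  | succ t => t.NoDefd
  | defd _ _ => False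

/-- The term is a numeral `s^β(0̄)`. -/
def IsNumeral : NTerm F ar → Prop
  | zero => True
  | param _ => False
  | succ t => t.IsNumeral
  | defd _ _ => False

/-- Evaluation of defined-symbol-free numeric terms under a parameter assignment
(junk value `0` on defined symbols). -/
def eval0 (σ : ℕ → ℕ) : NTerm F ar → ℕ
  | zero => 0
  | param n => σ n
  | succ t => t.eval0 σ + 1
  | defd _ _ => 0

end NTerm

variable {F : Type} {ar : F → ℕ}

/-- The substitution sending parameter `n < k` to `ts n` and fixing all other parameters. -/
def cutSub (k : ℕ) (ts : Fin k → NTerm F ar) : ℕ → NTerm F ar := fun n =>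
  if h : n < k then ts ⟨n, h⟩ else NTerm.param n

/-- Like `cutSub` but additionally sending the parameter `k` (the recursion parameter `m`)
to `u`. -/
def cutSub2 (k : ℕ) (ts : Fin k → NTerm F ar) (u : NTerm F ar) : ℕ → NTerm F ar := fun n =>
  if h : n < k then ts ⟨n, h⟩ else if n = k then u else NTerm.param n

/-- Like `cutSub2` but additionally sending parameter `k + 1` (the placeholder `k` for the
recursive call) to `recc`. -/
def stepSub (k : ℕ) (ts : Fin k → NTerm F ar) (u recc : NTerm F ar) : ℕ → NTerm F ar := fun n =>
  if h : n < k then ts ⟨n, h⟩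
  else if n = k then u
  else if n = k + 1 then recc
  else NTerm.param n

/-- Defining equations `D(f̂)` for the numeric defined symbols: for `f̂` of arity `α + 1`
(`α = ar f̂`), `base f̂ = t_B` uses only the parameters `0,…,α-1` (standing for `n₁,…,n_α`) and
`step f̂ = t_S` uses only the parameters `0,…,α+1`, where parameter `α` stands for `m` and
parameter `α+1` stands for the placeholder `k` of the recursive call
`f̂(n₁,…,n_α,m)`. -/
structure NumDefs (F : Type) (ar : F → ℕ) where
  base : F → NTerm F ar
  step : F → NTerm F ar

/-- Wellformedness of the numeric defining equations with respect to the order `prec` on the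
defined symbols: parameter conditions and the condition that all defined symbols occurring in
`t_B, t_S` are `prec`-smaller than `f̂`. -/
structure GoodNumDefs (prec : F → F → Prop) (D : NumDefs F ar) : Prop where
  base_params : ∀ f n, (D.base f).HasParam n → n < ar f
  step_params : ∀ f n, (D.step f).HasParam n → n < ar f + 2
  base_symbs : ∀ f g, (D.base f).HasSymb g → prec g f
  step_symbs : ∀ f g, (D.step f).HasSymb g → prec g f

end Schematic
namespace Schematic

variable {F : Type} {ar : F → ℕ}

/-- Big-step evaluation of numeric terms under a parameter assignment `σ`, following the
defining equations `D(F̂_ω)`: `NEval D σ t β` means that `σ(t)` evaluates (normalizes under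
`R(F̂_ω)`) to the numeral `β`. -/
inductive NEval (D : NumDefs F ar) (σ : ℕ → ℕ) : NTerm F ar → ℕ → Prop where
  | zero : NEval D σ NTerm.zero 0
  | param (n : ℕ) : NEval D σ (NTerm.param n) (σ n)
  | succ {t : NTerm F ar} {β : ℕ} : NEval D σ t β → NEval D σ (NTerm.succ t) (β + 1)
  | defdBase (f : F) (ts : Fin (ar f + 1) → NTerm F ar) (νs : Fin (ar f) → ℕ) {β : ℕ} :
      (∀ i : Fin (ar f), NEval D σ (ts i.castSucc) (νs i)) →
      NEval D σ (ts (Fin.last (ar f))) 0 →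
      NEval D σ ((D.base f).subst (cutSub (ar f) fun i => NTerm.ofNat F ar (νs i))) β →
      NEval D σ (NTerm.defd f ts) β
  | defdStep (f : F) (ts : Fin (ar f + 1) → NTerm F ar) (νs : Fin (ar f) → ℕ) (p : ℕ)
      {β : ℕ} :
      (∀ i : Fin (ar f), NEval D σ (ts i.castSucc) (νs i)) →
      NEval D σ (ts (Fin.last (ar f))) (p + 1) →
      NEval D σ ((D.step f).subst (stepSub (ar f) (fun i => NTerm.ofNat F ar (νs i))
        (NTerm.ofNat F ar p)
        (NTerm.defd f (Fin.snoc (fun i => NTerm.ofNat F ar (νs i)) (NTerm.ofNat F ar p))))) β →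
      NEval D σ (NTerm.defd f ts) β

end Schematic
namespace Schematic

/-- Individual terms `T^ι`: built from `ι`-constants (`C`), V-terms `X(t₁,…,t_α)` over global
variables `X ∈ G` of type `ω^{gar X} → ι` with numeric arguments, ordinary function
applications (`Fn` with arities `far`), and defined `ι`-function symbols `f̂ ∈ Fh` of type
`(ω^{gtys f̂ 1} → ι) × … × (ω^{gtys f̂ (gnum f̂)} → ι) × ω^{nar f̂ + 1} → ι`, applied to global
variables of matching types and numeric arguments. -/
inductive ITerm (F : Type) (ar : F → ℕ) (C : Type) (Fn : Type) (far : Fn → ℕ)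
    (G : Type) (gar : G → ℕ) (Fh : Type) (gnum : Fh → ℕ)
    (gtys : (h : Fh) → Fin (gnum h) → ℕ) (nar : Fh → ℕ) : Type where
  | const : C → ITerm F ar C Fn far G gar Fh gnum gtys nar
  | vterm : (X : G) → (Fin (gar X) → NTerm F ar) → ITerm F ar C Fn far G gar Fh gnum gtys nar
  | app : (f : Fn) → (Fin (far f) → ITerm F ar C Fn far G gar Fh gnum gtys nar) →
      ITerm F ar C Fn far G gar Fh gnum gtys nar
  | defd : (h : Fh) → (Xs : Fin (gnum h) → G) → (∀ i, gar (Xs i) = gtys h i) →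
      (Fin (nar h + 1) → NTerm F ar) → ITerm F ar C Fn far G gar Fh gnum gtys nar

variable {F : Type} {ar : F → ℕ} {C : Type} {Fn : Type} {far : Fn → ℕ}
  {G : Type} {gar : G → ℕ} {Fh : Type} {gnum : Fh → ℕ}
  {gtys : (h : Fh) → Fin (gnum h) → ℕ} {nar : Fh → ℕ}

/-- Instantiation of a term over formal constants `C'` and formal global variables `G'`:
constants are mapped by `cmap`, global variables are renamed along `ren` (type preserving by
`hren`) and the parameters are substituted by `σn`. -/
def ITerm.instC {C' : Type} {G' : Type} {gar' : G' → ℕ}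
    (cmap : C' → ITerm F ar C Fn far G gar Fh gnum gtys nar)
    (ren : G' → G) (hren : ∀ x, gar (ren x) = gar' x) (σn : ℕ → NTerm F ar) :
    ITerm F ar C' Fn far G' gar' Fh gnum gtys nar → ITerm F ar C Fn far G gar Fh gnum gtys nar
  | .const c => cmap c
  | .vterm x ns => .vterm (ren x) fun j => (ns (Fin.cast (hren x) j)).subst σn
  | .app f ss => .app f fun j => (ss j).instC cmap ren hren σn
  | .defd h Ys hty ns =>
      .defd h (fun i => ren (Ys i)) (fun i => (hren (Ys i)).trans (hty i)) fun j =>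
        (ns j).subst σn

/-- Defining equations `D(f̂)` for the defined `ι`-function symbols.  The bodies `t_B` and
`t_S` of `f̂` are terms whose global variables are the formal variables `X⃗` (represented by
`Fin (gnum f̂)` with arities `gtys f̂`), whose parameters stand for `n₁,…,n_{nar f̂}` (indices
`< nar f̂`) resp. additionally `m` (index `nar f̂`), and where the extra constant
`none : Option C` is the placeholder variable `Y : ι` for the recursive call. -/
structure IDefs (F : Type) (ar : F → ℕ) (C : Type) (Fn : Type) (far : Fn → ℕ)
    (Fh : Type) (gnum : Fh → ℕ) (gtys : (h : Fh) → Fin (gnum h) → ℕ) (nar : Fh → ℕ) where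
  base : (h : Fh) → ITerm F ar (Option C) Fn far (Fin (gnum h)) (gtys h) Fh gnum gtys nar
  step : (h : Fh) → ITerm F ar (Option C) Fn far (Fin (gnum h)) (gtys h) Fh gnum gtys nar

/-- Instantiation of a defining-equation body: the formal global variables are replaced by
`Xs`, the parameters are substituted by `σn`, and the placeholder `Y` is replaced by
`recv`. -/
def instBody {h : Fh} (Xs : Fin (gnum h) → G) (hty : ∀ i, gar (Xs i) = gtys h i)
    (σn : ℕ → NTerm F ar) (recv : ITerm F ar C Fn far G gar Fh gnum gtys nar)
    (body : ITerm F ar (Option C) Fn far (Fin (gnum h)) (gtys h) Fh gnum gtys nar) :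
    ITerm F ar C Fn far G gar Fh gnum gtys nar :=
  body.instC (fun o => Option.elim o recv fun c => ITerm.const c) Xs hty σn

/-- The parameter `n` occurs in the `ι`-term. -/
def ITerm.IHasParam (n : ℕ) : ITerm F ar C Fn far G gar Fh gnum gtys nar → Prop
  | .const _ => False
  | .vterm _ ns => ∃ j, (ns j).HasParam n
  | .app _ ss => ∃ j, (ss j).IHasParam n
  | .defd _ _ _ ns => ∃ j, (ns j).HasParam n

/-- The defined `ι`-symbol `h0` occurs in the `ι`-term. -/
def ITerm.IHasIDef (h0 : Fh) : ITerm F ar C Fn far G gar Fh gnum gtys nar → Prop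
  | .const _ => False
  | .vterm _ _ => False
  | .app _ ss => ∃ j, (ss j).IHasIDef h0
  | .defd h _ _ _ => h = h0

/-- The constant `c` occurs in the `ι`-term. -/
def ITerm.IHasConst (c : C) : ITerm F ar C Fn far G gar Fh gnum gtys nar → Prop
  | .const c' => c' = c
  | .vterm _ _ => False
  | .app _ ss => ∃ j, (ss j).IHasConst c
  | .defd _ _ _ _ => False

/-- Wellformedness of the `ι` defining equations with respect to the order `precI` on the
defined `ι`-symbols: all defined `ι`-symbols occurring in the bodies are `precI`-smaller,
the parameters of `t_B` are among `n₁,…,n_β`, the parameters of `t_S` are among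
`n₁,…,n_β, m`, and `t_B` does not contain the placeholder `Y`. -/
structure GoodIDefs (precI : Fh → Fh → Prop) (DI : IDefs F ar C Fn far Fh gnum gtys nar) :
    Prop where
  base_params : ∀ h n, (DI.base h).IHasParam n → n < nar h
  step_params : ∀ h n, (DI.step h).IHasParam n → n < nar h + 1
  base_symbs : ∀ h h', (DI.base h).IHasIDef h' → precI h' h
  step_symbs : ∀ h h', (DI.step h).IHasIDef h' → precI h' h
  base_noY : ∀ h, ¬ (DI.base h).IHasConst (none : Option C)

end Schematic
namespace Schematic

variable {F : Type} {ar : F → ℕ} {C : Type} {Fn : Type} {far : Fn → ℕ}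
  {G : Type} {gar : G → ℕ} {Fh : Type} {gnum : Fh → ℕ}
  {gtys : (h : Fh) → Fin (gnum h) → ℕ} {nar : Fh → ℕ}

/-- Individual variables `V^ι`: V-terms `X(ν⃗)` where `ν⃗` is a tuple of numerals. -/
structure IVar (G : Type) (gar : G → ℕ) where
  X : G
  idx : Fin (gar X) → ℕ

/-- A pair `(X(s⃗), t)` of an s-substitution: a V-term over the global variable `X` with
argument tuple `s⃗` (terms of `T^ω₀`, i.e. without defined symbols) and a term `t ∈ T^ι`. -/
structure SPair (F : Type) (ar : F → ℕ) (C : Type) (Fn : Type) (far : Fn → ℕ)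
    (G : Type) (gar : G → ℕ) (Fh : Type) (gnum : Fh → ℕ)
    (gtys : (h : Fh) → Fin (gnum h) → ℕ) (nar : Fh → ℕ) where
  X : G
  args : Fin (gar X) → NTerm F ar
  val : ITerm F ar C Fn far G gar Fh gnum gtys nar

/-- The instantiated domain variable `X(σ(s⃗))` of a pair under a parameter assignment. -/
def SPair.dvar (σ : ℕ → ℕ) (p : SPair F ar C Fn far G gar Fh gnum gtys nar) : IVar G gar :=
  ⟨p.X, fun i => (p.args i).eval0 σ⟩

/-- `Θ` is an s-substitution: a finite set of pairs `(X(s⃗),t)` with `s⃗` a tuple of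
`T^ω₀`-terms, such that for any two distinct pairs `(X(s⃗),t)` and `(Y(s⃗'),t')` either
`X ≠ Y` or the tuples `s⃗, s⃗'` are essentially distinct (their instantiations differ under
every parameter assignment). -/
def IsSSubst (Θ : Finset (SPair F ar C Fn far G gar Fh gnum gtys nar)) : Prop :=
  (∀ p ∈ Θ, ∀ i, (p.args i).NoDefd) ∧
  ∀ p ∈ Θ, ∀ q ∈ Θ, p ≠ q →
    p.X ≠ q.X ∨ ∀ σ : ℕ → ℕ, p.dvar σ ≠ q.dvar σ

end Schematic
namespace Schematic

variable {F : Type} {ar : F → ℕ} {C : Type} {Fn : Type} {far : Fn → ℕ}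
  {G : Type} {gar : G → ℕ} {Fh : Type} {gnum : Fh → ℕ}
  {gtys : (h : Fh) → Fin (gnum h) → ℕ} {nar : Fh → ℕ}

/-- Ordinary first-order terms (members of `T^ι₀`): built from individual variables (`IVar`),
constants and function applications. -/
inductive FTerm (C : Type) (Fn : Type) (far : Fn → ℕ) (G : Type) (gar : G → ℕ) : Type where
  | var : IVar G gar → FTerm C Fn far G gar
  | const : C → FTerm C Fn far G gar
  | app : (f : Fn) → (Fin (far f) → FTerm C Fn far G gar) → FTerm C Fn far G gar

/-- The individual variable `v` occurs in the first-order term. -/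
def FTerm.HasVar (v : IVar G gar) : FTerm C Fn far G gar → Prop
  | .var w => w = v
  | .const _ => False
  | .app _ ss => ∃ j, (ss j).HasVar v

/-- Big-step evaluation `t Θ[σ]` of an `ι`-term: the simultaneous application of the
s-substitution `Θ` under the parameter assignment `σ` together with evaluation `↓_ι`
(Definition of `tΘ[σ]`).  With `Θ = ∅` this is the plain evaluation `σ(t)↓_ι`. -/
inductive SEval (D : NumDefs F ar) (DI : IDefs F ar C Fn far Fh gnum gtys nar) (σ : ℕ → ℕ) :
    Finset (SPair F ar C Fn far G gar Fh gnum gtys nar) →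
    ITerm F ar C Fn far G gar Fh gnum gtys nar → FTerm C Fn far G gar → Prop where
  | const (Θ : Finset (SPair F ar C Fn far G gar Fh gnum gtys nar)) (c : C) :
      SEval D DI σ Θ (ITerm.const c) (FTerm.const c)
  | vtermHit (Θ : Finset (SPair F ar C Fn far G gar Fh gnum gtys nar))
      (X : G) (ns : Fin (gar X) → NTerm F ar) (νs : Fin (gar X) → ℕ)
      (p : SPair F ar C Fn far G gar Fh gnum gtys nar) (u : FTerm C Fn far G gar) :
      (∀ i, NEval D σ (ns i) (νs i)) →
      p ∈ Θ → p.dvar σ = ⟨X, νs⟩ →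
      SEval D DI σ ∅ p.val u →
      SEval D DI σ Θ (ITerm.vterm X ns) u
  | vtermMiss (Θ : Finset (SPair F ar C Fn far G gar Fh gnum gtys nar))
      (X : G) (ns : Fin (gar X) → NTerm F ar) (νs : Fin (gar X) → ℕ) :
      (∀ i, NEval D σ (ns i) (νs i)) →
      (∀ p ∈ Θ, p.dvar σ ≠ (⟨X, νs⟩ : IVar G gar)) →
      SEval D DI σ Θ (ITerm.vterm X ns) (FTerm.var ⟨X, νs⟩)
  | app (Θ : Finset (SPair F ar C Fn far G gar Fh gnum gtys nar)) (f : Fn)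
      (ss : Fin (far f) → ITerm F ar C Fn far G gar Fh gnum gtys nar)
      (us : Fin (far f) → FTerm C Fn far G gar) :
      (∀ j, SEval D DI σ Θ (ss j) (us j)) →
      SEval D DI σ Θ (ITerm.app f ss) (FTerm.app f us)
  | defdBase (Θ : Finset (SPair F ar C Fn far G gar Fh gnum gtys nar)) (h : Fh)
      (Xs : Fin (gnum h) → G) (hty : ∀ i, gar (Xs i) = gtys h i)
      (ns : Fin (nar h + 1) → NTerm F ar) (νs : Fin (nar h) → ℕ) (u : FTerm C Fn far G gar) :
      (∀ i : Fin (nar h), NEval D σ (ns i.castSucc) (νs i)) →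
      NEval D σ (ns (Fin.last (nar h))) 0 →
      SEval D DI σ Θ (instBody Xs hty (cutSub (nar h) fun i => NTerm.ofNat F ar (νs i))
        (ITerm.defd h Xs hty ns) (DI.base h)) u →
      SEval D DI σ Θ (ITerm.defd h Xs hty ns) u
  | defdStep (Θ : Finset (SPair F ar C Fn far G gar Fh gnum gtys nar)) (h : Fh)
      (Xs : Fin (gnum h) → G) (hty : ∀ i, gar (Xs i) = gtys h i)
      (ns : Fin (nar h + 1) → NTerm F ar) (νs : Fin (nar h) → ℕ) (p : ℕ)
      (u : FTerm C Fn far G gar) :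
      (∀ i : Fin (nar h), NEval D σ (ns i.castSucc) (νs i)) →
      NEval D σ (ns (Fin.last (nar h))) (p + 1) →
      SEval D DI σ Θ (instBody Xs hty
        (cutSub2 (nar h) (fun i => NTerm.ofNat F ar (νs i)) (NTerm.ofNat F ar p))
        (ITerm.defd h Xs hty (Fin.snoc (fun i => NTerm.ofNat F ar (νs i)) (NTerm.ofNat F ar p)))
        (DI.step h)) u →
      SEval D DI σ Θ (ITerm.defd h Xs hty ns) u

/-- The s-substitution `Θ` is normal: for every parameter assignment `σ`, the domain of
`Θ[σ]` is disjoint from the individual variables occurring in the range of `Θ[σ]`. -/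
def IsNormalS (D : NumDefs F ar) (DI : IDefs F ar C Fn far Fh gnum gtys nar)
    (Θ : Finset (SPair F ar C Fn far G gar Fh gnum gtys nar)) : Prop :=
  ∀ σ : ℕ → ℕ, ∀ p ∈ Θ, ∀ q ∈ Θ, ∀ u, SEval D DI σ ∅ q.val u → ¬ u.HasVar (p.dvar σ)

/-- The pair `(Θ₁, Θ₂)` is composable: for all parameter assignments `σ`,
`dom(Θ₁[σ]) ∩ dom(Θ₂[σ]) = ∅` and `dom(Θ₁[σ]) ∩ V^ι(rg(Θ₂[σ])) = ∅`. -/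
def ComposableS (D : NumDefs F ar) (DI : IDefs F ar C Fn far Fh gnum gtys nar)
    (Θ₁ Θ₂ : Finset (SPair F ar C Fn far G gar Fh gnum gtys nar)) : Prop :=
  ∀ σ : ℕ → ℕ,
    (∀ p ∈ Θ₁, ∀ q ∈ Θ₂, p.dvar σ ≠ q.dvar σ) ∧
    (∀ p ∈ Θ₁, ∀ q ∈ Θ₂, ∀ u, SEval D DI σ ∅ q.val u → ¬ u.HasVar (p.dvar σ))

end Schematic
namespace Schematic

/-- Formula schemata `FS`: built from formula variables (`Ξ`), atoms `P(t₁,…,t_α)` over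
ordinary predicate symbols `P ∈ Pr` with `ι`-term arguments, atoms
`P̂(X₁,…,X_α,t₁,…,t_{β+1})` over defined predicate symbols `P̂ ∈ Ph` with global-variable
arguments of matching types and numeric arguments, and the connectives `¬, ∧, ∨`. -/
inductive FSchema (F : Type) (ar : F → ℕ) (C : Type) (Fn : Type) (far : Fn → ℕ)
    (G : Type) (gar : G → ℕ) (Fh : Type) (gnum : Fh → ℕ)
    (gtys : (h : Fh) → Fin (gnum h) → ℕ) (nar : Fh → ℕ)
    (Pr : Type) (par : Pr → ℕ) (Ph : Type) (pgnum : Ph → ℕ)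
    (pgtys : (P : Ph) → Fin (pgnum P) → ℕ) (pnar : Ph → ℕ) (Ξ : Type) : Type where
  | fvar : Ξ → FSchema F ar C Fn far G gar Fh gnum gtys nar Pr par Ph pgnum pgtys pnar Ξ
  | atom : (P : Pr) → (Fin (par P) → ITerm F ar C Fn far G gar Fh gnum gtys nar) →
      FSchema F ar C Fn far G gar Fh gnum gtys nar Pr par Ph pgnum pgtys pnar Ξ
  | datom : (P : Ph) → (Xs : Fin (pgnum P) → G) → (∀ i, gar (Xs i) = pgtys P i) →
      (Fin (pnar P + 1) → NTerm F ar) →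
      FSchema F ar C Fn far G gar Fh gnum gtys nar Pr par Ph pgnum pgtys pnar Ξ
  | not : FSchema F ar C Fn far G gar Fh gnum gtys nar Pr par Ph pgnum pgtys pnar Ξ →
      FSchema F ar C Fn far G gar Fh gnum gtys nar Pr par Ph pgnum pgtys pnar Ξ
  | and : FSchema F ar C Fn far G gar Fh gnum gtys nar Pr par Ph pgnum pgtys pnar Ξ →
      FSchema F ar C Fn far G gar Fh gnum gtys nar Pr par Ph pgnum pgtys pnar Ξ →
      FSchema F ar C Fn far G gar Fh gnum gtys nar Pr par Ph pgnum pgtys pnar Ξ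
  | or : FSchema F ar C Fn far G gar Fh gnum gtys nar Pr par Ph pgnum pgtys pnar Ξ →
      FSchema F ar C Fn far G gar Fh gnum gtys nar Pr par Ph pgnum pgtys pnar Ξ →
      FSchema F ar C Fn far G gar Fh gnum gtys nar Pr par Ph pgnum pgtys pnar Ξ

variable {F : Type} {ar : F → ℕ} {C : Type} {Fn : Type} {far : Fn → ℕ}
  {G : Type} {gar : G → ℕ} {Fh : Type} {gnum : Fh → ℕ}
  {gtys : (h : Fh) → Fin (gnum h) → ℕ} {nar : Fh → ℕ}
  {Pr : Type} {par : Pr → ℕ} {Ph : Type} {pgnum : Ph → ℕ}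
  {pgtys : (P : Ph) → Fin (pgnum P) → ℕ} {pnar : Ph → ℕ} {Ξ : Type}

/-- Instantiation of a defining-equation body of a defined predicate symbol `P̂`: the formal
global variables `Fin (pgnum P̂)` are replaced by `Xs`, the parameters are substituted by
`σn`, and the formula variable `ξ` is replaced by `recv`. -/
def FSchema.instP {P : Ph} (Xs : Fin (pgnum P) → G) (hty : ∀ i, gar (Xs i) = pgtys P i)
    (σn : ℕ → NTerm F ar)
    (recv : FSchema F ar C Fn far G gar Fh gnum gtys nar Pr par Ph pgnum pgtys pnar Ξ) :
    FSchema F ar C Fn far (Fin (pgnum P)) (pgtys P) Fh gnum gtys nar Pr par Ph pgnum pgtys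
      pnar Unit →
    FSchema F ar C Fn far G gar Fh gnum gtys nar Pr par Ph pgnum pgtys pnar Ξ
  | .fvar _ => recv
  | .atom Q ts => .atom Q fun j => (ts j).instC (fun c => ITerm.const c) Xs hty σn
  | .datom Q Ys hty' ns =>
      .datom Q (fun i => Xs (Ys i)) (fun i => (hty (Ys i)).trans (hty' i)) fun j =>
        (ns j).subst σn
  | .not A => .not (FSchema.instP Xs hty σn recv A)
  | .and A B => .and (FSchema.instP Xs hty σn recv A) (FSchema.instP Xs hty σn recv B)
  | .or A B => .or (FSchema.instP Xs hty σn recv A) (FSchema.instP Xs hty σn recv B)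

/-- Defining equations `D(P̂)` for the defined predicate symbols: the bodies `F_B` and `F_S`
of `P̂` are formula schemata whose global variables are the formal variables `X⃗`
(represented by `Fin (pgnum P̂)` with arities `pgtys P̂`), whose parameters stand for the
numeric arguments (indices `< pnar P̂`, and index `pnar P̂` for `m` in `F_S`), and whose only
formula variable is `ξ` (represented by `Unit`), the placeholder for the recursive call. -/
structure PDefs (F : Type) (ar : F → ℕ) (C : Type) (Fn : Type) (far : Fn → ℕ)
    (Fh : Type) (gnum : Fh → ℕ) (gtys : (h : Fh) → Fin (gnum h) → ℕ) (nar : Fh → ℕ)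
    (Pr : Type) (par : Pr → ℕ) (Ph : Type) (pgnum : Ph → ℕ)
    (pgtys : (P : Ph) → Fin (pgnum P) → ℕ) (pnar : Ph → ℕ) where
  base : (P : Ph) → FSchema F ar C Fn far (Fin (pgnum P)) (pgtys P) Fh gnum gtys nar Pr par
    Ph pgnum pgtys pnar Unit
  step : (P : Ph) → FSchema F ar C Fn far (Fin (pgnum P)) (pgtys P) Fh gnum gtys nar Pr par
    Ph pgnum pgtys pnar Unit

/-- The parameter `n` occurs in the formula schema. -/
def FSchema.FHasParam (n : ℕ) :
    FSchema F ar C Fn far G gar Fh gnum gtys nar Pr par Ph pgnum pgtys pnar Ξ → Prop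
  | .fvar _ => False
  | .atom _ ts => ∃ j, (ts j).IHasParam n
  | .datom _ _ _ ns => ∃ j, (ns j).HasParam n
  | .not A => A.FHasParam n
  | .and A B => A.FHasParam n ∨ B.FHasParam n
  | .or A B => A.FHasParam n ∨ B.FHasParam n

/-- The defined predicate symbol `Q0` occurs in the formula schema. -/
def FSchema.FHasPD (Q0 : Ph) :
    FSchema F ar C Fn far G gar Fh gnum gtys nar Pr par Ph pgnum pgtys pnar Ξ → Prop
  | .fvar _ => False
  | .atom _ _ => False
  | .datom Q _ _ _ => Q = Q0
  | .not A => A.FHasPD Q0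
  | .and A B => A.FHasPD Q0 ∨ B.FHasPD Q0
  | .or A B => A.FHasPD Q0 ∨ B.FHasPD Q0

/-- A formula variable occurs in the formula schema. -/
def FSchema.FHasFvar :
    FSchema F ar C Fn far G gar Fh gnum gtys nar Pr par Ph pgnum pgtys pnar Ξ → Prop
  | .fvar _ => True
  | .atom _ _ => False
  | .datom _ _ _ _ => False
  | .not A => A.FHasFvar
  | .and A B => A.FHasFvar ∨ B.FHasFvar
  | .or A B => A.FHasFvar ∨ B.FHasFvar

/-- Wellformedness of the predicate defining equations with respect to the order `precP` on
the defined predicate symbols: all defined predicate symbols occurring in the bodies are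
`precP`-smaller, the parameter conditions hold, and the base body `F_B` contains no formula
variable. -/
structure GoodPDefs (precP : Ph → Ph → Prop)
    (DP : PDefs F ar C Fn far Fh gnum gtys nar Pr par Ph pgnum pgtys pnar) : Prop where
  base_params : ∀ P n, (DP.base P).FHasParam n → n < pnar P
  step_params : ∀ P n, (DP.step P).FHasParam n → n < pnar P + 1
  base_symbs : ∀ P Q, (DP.base P).FHasPD Q → precP Q P
  step_symbs : ∀ P Q, (DP.step P).FHasPD Q → precP Q P
  base_noxi : ∀ P, ¬ (DP.base P).FHasFvar

/-- Formulas of `F₀`: ordinary quantifier-free first-order formulas, with atoms over ordinary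
predicate symbols applied to ordinary first-order terms, containing no defined symbols, no
parameters and no formula variables. -/
inductive F0Formula (C : Type) (Fn : Type) (far : Fn → ℕ) (G : Type) (gar : G → ℕ)
    (Pr : Type) (par : Pr → ℕ) : Type where
  | atom : (P : Pr) → (Fin (par P) → FTerm C Fn far G gar) → F0Formula C Fn far G gar Pr par
  | not : F0Formula C Fn far G gar Pr par → F0Formula C Fn far G gar Pr par
  | and : F0Formula C Fn far G gar Pr par → F0Formula C Fn far G gar Pr par →
      F0Formula C Fn far G gar Pr par
  | or : F0Formula C Fn far G gar Pr par → F0Formula C Fn far G gar Pr par →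
      F0Formula C Fn far G gar Pr par

/-- Big-step evaluation `F Θ[σ]` of a formula schema without formula variables: the
simultaneous application of the s-substitution `Θ` under the parameter assignment `σ`
together with the evaluation `↓_o` (unfolding the defining equations of the defined
predicate symbols according to the numeral value of the last numeric argument).  With
`Θ = ∅` this is the plain evaluation `σ(F)↓_o`. -/
inductive FSEval (D : NumDefs F ar) (DI : IDefs F ar C Fn far Fh gnum gtys nar)
    (DP : PDefs F ar C Fn far Fh gnum gtys nar Pr par Ph pgnum pgtys pnar) (σ : ℕ → ℕ) :
    Finset (SPair F ar C Fn far G gar Fh gnum gtys nar) →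
    FSchema F ar C Fn far G gar Fh gnum gtys nar Pr par Ph pgnum pgtys pnar Empty →
    F0Formula C Fn far G gar Pr par → Prop where
  | atom (Θ : Finset (SPair F ar C Fn far G gar Fh gnum gtys nar)) (P : Pr)
      (ts : Fin (par P) → ITerm F ar C Fn far G gar Fh gnum gtys nar)
      (us : Fin (par P) → FTerm C Fn far G gar) :
      (∀ j, SEval D DI σ Θ (ts j) (us j)) →
      FSEval D DI DP σ Θ (FSchema.atom P ts) (F0Formula.atom P us)
  | datomBase (Θ : Finset (SPair F ar C Fn far G gar Fh gnum gtys nar)) (P : Ph)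
      (Xs : Fin (pgnum P) → G) (hty : ∀ i, gar (Xs i) = pgtys P i)
      (ns : Fin (pnar P + 1) → NTerm F ar) (νs : Fin (pnar P) → ℕ)
      (Fo : F0Formula C Fn far G gar Pr par) :
      (∀ i : Fin (pnar P), NEval D σ (ns i.castSucc) (νs i)) →
      NEval D σ (ns (Fin.last (pnar P))) 0 →
      FSEval D DI DP σ Θ (FSchema.instP Xs hty
        (cutSub (pnar P) fun i => NTerm.ofNat F ar (νs i))
        (FSchema.datom P Xs hty ns) (DP.base P)) Fo →
      FSEval D DI DP σ Θ (FSchema.datom P Xs hty ns) Fo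
  | datomStep (Θ : Finset (SPair F ar C Fn far G gar Fh gnum gtys nar)) (P : Ph)
      (Xs : Fin (pgnum P) → G) (hty : ∀ i, gar (Xs i) = pgtys P i)
      (ns : Fin (pnar P + 1) → NTerm F ar) (νs : Fin (pnar P) → ℕ) (p : ℕ)
      (Fo : F0Formula C Fn far G gar Pr par) :
      (∀ i : Fin (pnar P), NEval D σ (ns i.castSucc) (νs i)) →
      NEval D σ (ns (Fin.last (pnar P))) (p + 1) →
      FSEval D DI DP σ Θ (FSchema.instP Xs hty
        (cutSub2 (pnar P) (fun i => NTerm.ofNat F ar (νs i)) (NTerm.ofNat F ar p))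
        (FSchema.datom P Xs hty
          (Fin.snoc (fun i => NTerm.ofNat F ar (νs i)) (NTerm.ofNat F ar p)))
        (DP.step P)) Fo →
      FSEval D DI DP σ Θ (FSchema.datom P Xs hty ns) Fo
  | not (Θ : Finset (SPair F ar C Fn far G gar Fh gnum gtys nar))
      (A : FSchema F ar C Fn far G gar Fh gnum gtys nar Pr par Ph pgnum pgtys pnar Empty)
      (Fo : F0Formula C Fn far G gar Pr par) :
      FSEval D DI DP σ Θ A Fo → FSEval D DI DP σ Θ A.not Fo.not
  | and (Θ : Finset (SPair F ar C Fn far G gar Fh gnum gtys nar))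
      (A B : FSchema F ar C Fn far G gar Fh gnum gtys nar Pr par Ph pgnum pgtys pnar Empty)
      (Fo Go : F0Formula C Fn far G gar Pr par) :
      FSEval D DI DP σ Θ A Fo → FSEval D DI DP σ Θ B Go →
      FSEval D DI DP σ Θ (A.and B) (Fo.and Go)
  | or (Θ : Finset (SPair F ar C Fn far G gar Fh gnum gtys nar))
      (A B : FSchema F ar C Fn far G gar Fh gnum gtys nar Pr par Ph pgnum pgtys pnar Empty)
      (Fo Go : F0Formula C Fn far G gar Pr par) :
      FSEval D DI DP σ Θ A Fo → FSEval D DI DP σ Θ B Go →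
      FSEval D DI DP σ Θ (A.or B) (Fo.or Go)

end Schematic

namespace Schematic

section AuxNum

variable {F : Type} {ar : F → ℕ}

lemma NEval_ofNat (D : NumDefs F ar) (σ : ℕ → ℕ) (n : ℕ) :
    NEval D σ (NTerm.ofNat F ar n) n := by
  induction n with
  | zero => exact .zero
  | succ n ih => exact .succ ih

/-- Totality predicate for the numeric defined symbol `f`. -/
def NTot (D : NumDefs F ar) (σ : ℕ → ℕ) (f : F) : Prop :=
  ∀ (m : ℕ) (ν : Fin (ar f) → ℕ) (ts : Fin (ar f + 1) → NTerm F ar),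
    (∀ i : Fin (ar f), NEval D σ (ts i.castSucc) (ν i)) →
    NEval D σ (ts (Fin.last (ar f))) m →
    ∃ β, NEval D σ (NTerm.defd f ts) β

lemma NEval_subst_total (D : NumDefs F ar) (σ : ℕ → ℕ) (σn : ℕ → NTerm F ar)
    (hσn : ∀ n, ∃ β, NEval D σ (σn n) β) :
    ∀ t : NTerm F ar, (∀ g, t.HasSymb g → NTot D σ g) →
      ∃ β, NEval D σ (t.subst σn) β := by
  intro t
  induction t with
  | zero => exact fun _ => ⟨0, .zero⟩
  | param n => exact fun _ => hσn n
  | succ t ih =>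
      intro hsym
      obtain ⟨β, hβ⟩ := ih hsym
      exact ⟨β + 1, .succ hβ⟩
  | defd g ts ih =>
      intro hsym
      choose ν hν using fun i => ih i (fun g' hg' => hsym g' (Or.inr ⟨i, hg'⟩))
      exact hsym g (Or.inl rfl) (ν (Fin.last (ar g))) (fun i => ν i.castSucc)
        (fun i => (ts i).subst σn) (fun i => hν i.castSucc) (hν (Fin.last (ar g)))

lemma NTot_all {prec : F → F → Prop} (hwf : WellFounded prec)
    (D : NumDefs F ar) (hD : GoodNumDefs prec D) (σ : ℕ → ℕ) :
    ∀ f : F, NTot D σ f := by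
  intro f
  refine hwf.induction (C := fun f => NTot D σ f) f ?_
  intro f IH m
  induction m with
  | zero =>
      intro ν ts hargs hlast
      obtain ⟨β, hβ⟩ := NEval_subst_total D σ
        (cutSub (ar f) fun i => NTerm.ofNat F ar (ν i))
        (fun n => by
          unfold cutSub
          split
          · exact ⟨_, NEval_ofNat D σ _⟩
          · exact ⟨σ n, .param n⟩)
        (D.base f) (fun g hg => IH g (hD.base_symbs f g hg))
      exact ⟨β, .defdBase f ts ν hargs hlast hβ⟩
  | succ p IHp =>
      intro ν ts hargs hlast
      obtain ⟨βr, hβr⟩ := IHp ν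
        (Fin.snoc (fun i => NTerm.ofNat F ar (ν i)) (NTerm.ofNat F ar p))
        (fun i => by rw [Fin.snoc_castSucc]; exact NEval_ofNat D σ (ν i))
        (by rw [Fin.snoc_last]; exact NEval_ofNat D σ p)
      obtain ⟨β, hβ⟩ := NEval_subst_total D σ
        (stepSub (ar f) (fun i => NTerm.ofNat F ar (ν i)) (NTerm.ofNat F ar p)
          (NTerm.defd f (Fin.snoc (fun i => NTerm.ofNat F ar (ν i)) (NTerm.ofNat F ar p))))
        (fun n => by
          unfold stepSub
          split
          · exact ⟨_, NEval_ofNat D σ _⟩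
          split
          · exact ⟨_, NEval_ofNat D σ _⟩
          split
          · exact ⟨βr, hβr⟩
          · exact ⟨σ n, .param n⟩)
        (D.step f) (fun g hg => IH g (hD.step_symbs f g hg))
      exact ⟨β, .defdStep f ts ν p hargs hlast hβ⟩

lemma NEval_total {prec : F → F → Prop} (hwf : WellFounded prec)
    (D : NumDefs F ar) (hD : GoodNumDefs prec D) (σ : ℕ → ℕ) :
    ∀ t : NTerm F ar, ∃ β, NEval D σ t β := by
  intro t
  induction t with
  | zero => exact ⟨0, .zero⟩
  | param n => exact ⟨σ n, .param n⟩
  | succ t ih => obtain ⟨β, hβ⟩ := ih; exact ⟨β + 1, .succ hβ⟩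
  | defd f ts ih =>
      choose ν hν using ih
      exact NTot_all hwf D hD σ f (ν (Fin.last (ar f))) (fun i => ν i.castSucc) ts
        (fun i => hν i.castSucc) (hν (Fin.last (ar f)))

end AuxNum

section AuxI

variable {F : Type} {ar : F → ℕ} {C : Type} {Fn : Type} {far : Fn → ℕ}
  {G : Type} {gar : G → ℕ} {Fh : Type} {gnum : Fh → ℕ}
  {gtys : (h : Fh) → Fin (gnum h) → ℕ} {nar : Fh → ℕ}

/-- Totality predicate for the defined `ι`-symbol `h`. -/
def ITot (D : NumDefs F ar) (DI : IDefs F ar C Fn far Fh gnum gtys nar) (σ : ℕ → ℕ)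
    (h : Fh) : Prop :=
  ∀ (m : ℕ) (ν : Fin (nar h) → ℕ) (Xs : Fin (gnum h) → G)
    (hty : ∀ i, gar (Xs i) = gtys h i) (ns : Fin (nar h + 1) → NTerm F ar),
    (∀ i : Fin (nar h), NEval D σ (ns i.castSucc) (ν i)) →
    NEval D σ (ns (Fin.last (nar h))) m →
    ∃ u, SEval D DI σ (∅ : Finset (SPair F ar C Fn far G gar Fh gnum gtys nar))
      (ITerm.defd h Xs hty ns) u

lemma SEval_instC_total (D : NumDefs F ar) (DI : IDefs F ar C Fn far Fh gnum gtys nar)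
    (σ : ℕ → ℕ) (hNE : ∀ t : NTerm F ar, ∃ β, NEval D σ t β)
    {C' : Type} {G' : Type} {gar' : G' → ℕ}
    (cmap : C' → ITerm F ar C Fn far G gar Fh gnum gtys nar)
    (ren : G' → G) (hren : ∀ x, gar (ren x) = gar' x) (σn : ℕ → NTerm F ar) :
    ∀ t : ITerm F ar C' Fn far G' gar' Fh gnum gtys nar,
      (∀ h', t.IHasIDef h' → ITot (G := G) (gar := gar) D DI σ h') →
      (∀ c, t.IHasConst c → ∃ u, SEval D DI σ ∅ (cmap c) u) →
      ∃ u, SEval D DI σ (∅ : Finset (SPair F ar C Fn far G gar Fh gnum gtys nar))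
        (t.instC cmap ren hren σn) u := by
  intro t
  induction t with
  | const c => exact fun _ hc => hc c rfl
  | vterm x ns =>
      intro _ _
      choose ν hν using fun j : Fin (gar (ren x)) =>
        hNE ((ns (Fin.cast (hren x) j)).subst σn)
      exact ⟨_, .vtermMiss ∅ (ren x) _ ν hν (fun p hp => (Finset.notMem_empty p hp).elim)⟩
  | app f ss ih =>
      intro hsym hc
      choose us hus using fun j =>
        ih j (fun h' hh' => hsym h' ⟨j, hh'⟩) (fun c hcc => hc c ⟨j, hcc⟩)
      exact ⟨_, .app ∅ f _ us hus⟩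
  | defd h' Ys hty' ns =>
      intro hsym _
      choose ν hν using fun j => hNE ((ns j).subst σn)
      exact hsym h' rfl (ν (Fin.last (nar h'))) (fun i => ν i.castSucc) _ _
        (fun j => (ns j).subst σn) (fun i => hν i.castSucc) (hν (Fin.last (nar h')))

lemma ITot_all {precI : Fh → Fh → Prop} (hwfI : WellFounded precI)
    (D : NumDefs F ar) (DI : IDefs F ar C Fn far Fh gnum gtys nar)
    (hDI : GoodIDefs precI DI) (σ : ℕ → ℕ)
    (hNE : ∀ t : NTerm F ar, ∃ β, NEval D σ t β) :
    ∀ h : Fh, ITot (G := G) (gar := gar) D DI σ h := by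
  intro h
  refine hwfI.induction (C := fun h => ITot (G := G) (gar := gar) D DI σ h) h ?_
  intro h IH m
  induction m with
  | zero =>
      intro ν Xs hty ns hargs hlast
      obtain ⟨u, hu⟩ := SEval_instC_total D DI σ hNE
        (fun o => Option.elim o (ITerm.defd h Xs hty ns) fun c => ITerm.const c)
        Xs hty (cutSub (nar h) fun i => NTerm.ofNat F ar (ν i)) (DI.base h)
        (fun h' hh' => IH h' (hDI.base_symbs h h' hh'))
        (fun c hc => by
          cases c with
          | none => exact absurd hc (hDI.base_noY h)
          | some c => exact ⟨_, .const ∅ c⟩)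
      exact ⟨u, .defdBase ∅ h Xs hty ns ν u hargs hlast hu⟩
  | succ p IHp =>
      intro ν Xs hty ns hargs hlast
      obtain ⟨ur, hur⟩ := IHp ν Xs hty
        (Fin.snoc (fun i => NTerm.ofNat F ar (ν i)) (NTerm.ofNat F ar p))
        (fun i => by rw [Fin.snoc_castSucc]; exact NEval_ofNat D σ (ν i))
        (by rw [Fin.snoc_last]; exact NEval_ofNat D σ p)
      obtain ⟨u, hu⟩ := SEval_instC_total D DI σ hNE
        (fun o => Option.elim o
          (ITerm.defd h Xs hty
            (Fin.snoc (fun i => NTerm.ofNat F ar (ν i)) (NTerm.ofNat F ar p)))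
          fun c => ITerm.const c)
        Xs hty (cutSub2 (nar h) (fun i => NTerm.ofNat F ar (ν i)) (NTerm.ofNat F ar p))
        (DI.step h)
        (fun h' hh' => IH h' (hDI.step_symbs h h' hh'))
        (fun c _ => by
          cases c with
          | none => exact ⟨ur, hur⟩
          | some c => exact ⟨_, .const ∅ c⟩)
      exact ⟨u, .defdStep ∅ h Xs hty ns ν p u hargs hlast hu⟩

lemma SEval_total (D : NumDefs F ar) (DI : IDefs F ar C Fn far Fh gnum gtys nar)
    (σ : ℕ → ℕ) (hNE : ∀ t : NTerm F ar, ∃ β, NEval D σ t β)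
    (hIT : ∀ h : Fh, ITot (G := G) (gar := gar) D DI σ h) :
    ∀ t : ITerm F ar C Fn far G gar Fh gnum gtys nar, ∃ u, SEval D DI σ ∅ t u := by
  intro t
  induction t with
  | const c => exact ⟨_, .const ∅ c⟩
  | vterm X ns =>
      choose ν hν using fun i => hNE (ns i)
      exact ⟨_, .vtermMiss ∅ X ns ν hν (fun p hp => (Finset.notMem_empty p hp).elim)⟩
  | app f ss ih =>
      choose us hus using ih
      exact ⟨_, .app ∅ f ss us hus⟩
  | defd h Xs hty ns =>
      choose ν hν using fun j => hNE (ns j)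
      exact hIT h (ν (Fin.last (nar h))) (fun i => ν i.castSucc) Xs hty ns
        (fun i => hν i.castSucc) (hν (Fin.last (nar h)))

end AuxI

section AuxP

variable {F : Type} {ar : F → ℕ} {C : Type} {Fn : Type} {far : Fn → ℕ}
  {G : Type} {gar : G → ℕ} {Fh : Type} {gnum : Fh → ℕ}
  {gtys : (h : Fh) → Fin (gnum h) → ℕ} {nar : Fh → ℕ}
  {Pr : Type} {par : Pr → ℕ} {Ph : Type} {pgnum : Ph → ℕ}
  {pgtys : (P : Ph) → Fin (pgnum P) → ℕ} {pnar : Ph → ℕ}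

/-- Totality predicate for the defined predicate symbol `P`. -/
def PTot (D : NumDefs F ar) (DI : IDefs F ar C Fn far Fh gnum gtys nar)
    (DP : PDefs F ar C Fn far Fh gnum gtys nar Pr par Ph pgnum pgtys pnar)
    (σ : ℕ → ℕ) (P : Ph) : Prop :=
  ∀ (m : ℕ) (ν : Fin (pnar P) → ℕ) (Xs : Fin (pgnum P) → G)
    (hty : ∀ i, gar (Xs i) = pgtys P i) (ns : Fin (pnar P + 1) → NTerm F ar),
    (∀ i : Fin (pnar P), NEval D σ (ns i.castSucc) (ν i)) →
    NEval D σ (ns (Fin.last (pnar P))) m →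
    ∃ Fo, FSEval D DI DP σ (∅ : Finset (SPair F ar C Fn far G gar Fh gnum gtys nar))
      (FSchema.datom P Xs hty ns) Fo

lemma FSEval_instP_total (D : NumDefs F ar) (DI : IDefs F ar C Fn far Fh gnum gtys nar)
    (DP : PDefs F ar C Fn far Fh gnum gtys nar Pr par Ph pgnum pgtys pnar)
    (σ : ℕ → ℕ) (hNE : ∀ t : NTerm F ar, ∃ β, NEval D σ t β)
    (hIT : ∀ h : Fh, ITot (G := G) (gar := gar) D DI σ h)
    {P : Ph} (Xs : Fin (pgnum P) → G) (hty : ∀ i, gar (Xs i) = pgtys P i)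
    (σn : ℕ → NTerm F ar)
    (recv : FSchema F ar C Fn far G gar Fh gnum gtys nar Pr par Ph pgnum pgtys pnar Empty) :
    ∀ A : FSchema F ar C Fn far (Fin (pgnum P)) (pgtys P) Fh gnum gtys nar Pr par Ph pgnum
        pgtys pnar Unit,
      (∀ Q, A.FHasPD Q → PTot (G := G) (gar := gar) D DI DP σ Q) →
      (A.FHasFvar → ∃ Fo, FSEval D DI DP σ ∅ recv Fo) →
      ∃ Fo, FSEval D DI DP σ (∅ : Finset (SPair F ar C Fn far G gar Fh gnum gtys nar))
        (FSchema.instP Xs hty σn recv A) Fo := by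
  intro A
  induction A with
  | fvar _ => exact fun _ hr => hr trivial
  | atom Q ts =>
      intro _ _
      choose us hus using fun j => SEval_instC_total D DI σ hNE
        (fun c => ITerm.const c) Xs hty σn (ts j) (fun h' _ => hIT h')
        (fun c _ => ⟨_, .const ∅ c⟩)
      exact ⟨_, .atom ∅ Q _ us hus⟩
  | datom Q Ys hty' ns =>
      intro hPD _
      choose ν hν using fun j => hNE ((ns j).subst σn)
      exact hPD Q rfl (ν (Fin.last (pnar Q))) (fun i => ν i.castSucc) _ _
        (fun j => (ns j).subst σn) (fun i => hν i.castSucc) (hν (Fin.last (pnar Q)))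
  | not A ih =>
      intro hPD hr
      obtain ⟨Fo, h⟩ := ih hPD hr
      exact ⟨_, .not ∅ _ _ h⟩
  | and A B ihA ihB =>
      intro hPD hr
      obtain ⟨Fo, hA⟩ := ihA (fun Q hQ => hPD Q (Or.inl hQ)) (fun hf => hr (Or.inl hf))
      obtain ⟨Go, hB⟩ := ihB (fun Q hQ => hPD Q (Or.inr hQ)) (fun hf => hr (Or.inr hf))
      exact ⟨_, .and ∅ _ _ _ _ hA hB⟩
  | or A B ihA ihB =>
      intro hPD hr
      obtain ⟨Fo, hA⟩ := ihA (fun Q hQ => hPD Q (Or.inl hQ)) (fun hf => hr (Or.inl hf))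
      obtain ⟨Go, hB⟩ := ihB (fun Q hQ => hPD Q (Or.inr hQ)) (fun hf => hr (Or.inr hf))
      exact ⟨_, .or ∅ _ _ _ _ hA hB⟩

lemma PTot_all {precP : Ph → Ph → Prop} (hwfP : WellFounded precP)
    (D : NumDefs F ar) (DI : IDefs F ar C Fn far Fh gnum gtys nar)
    (DP : PDefs F ar C Fn far Fh gnum gtys nar Pr par Ph pgnum pgtys pnar)
    (hDP : GoodPDefs precP DP) (σ : ℕ → ℕ)
    (hNE : ∀ t : NTerm F ar, ∃ β, NEval D σ t β)
    (hIT : ∀ h : Fh, ITot (G := G) (gar := gar) D DI σ h) :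
    ∀ P : Ph, PTot (G := G) (gar := gar) D DI DP σ P := by
  intro P
  refine hwfP.induction (C := fun P => PTot (G := G) (gar := gar) D DI DP σ P) P ?_
  intro P IH m
  induction m with
  | zero =>
      intro ν Xs hty ns hargs hlast
      obtain ⟨Fo, hFo⟩ := FSEval_instP_total D DI DP σ hNE hIT Xs hty
        (cutSub (pnar P) fun i => NTerm.ofNat F ar (ν i))
        (FSchema.datom P Xs hty ns) (DP.base P)
        (fun Q hQ => IH Q (hDP.base_symbs P Q hQ))
        (fun hf => absurd hf (hDP.base_noxi P))
      exact ⟨Fo, .datomBase ∅ P Xs hty ns ν Fo hargs hlast hFo⟩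
  | succ p IHp =>
      intro ν Xs hty ns hargs hlast
      obtain ⟨Go, hGo⟩ := IHp ν Xs hty
        (Fin.snoc (fun i => NTerm.ofNat F ar (ν i)) (NTerm.ofNat F ar p))
        (fun i => by rw [Fin.snoc_castSucc]; exact NEval_ofNat D σ (ν i))
        (by rw [Fin.snoc_last]; exact NEval_ofNat D σ p)
      obtain ⟨Fo, hFo⟩ := FSEval_instP_total D DI DP σ hNE hIT Xs hty
        (cutSub2 (pnar P) (fun i => NTerm.ofNat F ar (ν i)) (NTerm.ofNat F ar p))
        (FSchema.datom P Xs hty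
          (Fin.snoc (fun i => NTerm.ofNat F ar (ν i)) (NTerm.ofNat F ar p)))
        (DP.step P)
        (fun Q hQ => IH Q (hDP.step_symbs P Q hQ))
        (fun _ => ⟨Go, hGo⟩)
      exact ⟨Fo, .datomStep ∅ P Xs hty ns ν p Fo hargs hlast hFo⟩

end AuxP

end Schematic

open Schematic

/-- For every formula schema `F ∈ FS₀` (containing no formula variables, here
enforced by taking the type of formula variables to be `Empty`) and every parameter
assignment `σ`, the evaluation `σ(F)↓_o` lies in `F₀`: it evaluates to an ordinary
quantifier-free first-order formula containing no defined symbols and no parameters. -/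
theorem statement9
    (F : Type) (ar : F → ℕ) (prec : F → F → Prop)
    (hirr : ∀ f, ¬ prec f f) (htrans : Transitive prec) (hwf : WellFounded prec)
    (D : NumDefs F ar) (hD : GoodNumDefs prec D)
    (C Fn : Type) (far : Fn → ℕ) (G : Type) (gar : G → ℕ)
    (Fh : Type) (gnum : Fh → ℕ) (gtys : (h : Fh) → Fin (gnum h) → ℕ) (nar : Fh → ℕ)
    (precI : Fh → Fh → Prop)
    (hirrI : ∀ h, ¬ precI h h) (htransI : Transitive precI) (hwfI : WellFounded precI)
    (DI : IDefs F ar C Fn far Fh gnum gtys nar) (hDI : GoodIDefs precI DI)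
    (Pr : Type) (par : Pr → ℕ) (Ph : Type) (pgnum : Ph → ℕ)
    (pgtys : (P : Ph) → Fin (pgnum P) → ℕ) (pnar : Ph → ℕ)
    (precP : Ph → Ph → Prop)
    (hirrP : ∀ P, ¬ precP P P) (htransP : Transitive precP) (hwfP : WellFounded precP)
    (DP : PDefs F ar C Fn far Fh gnum gtys nar Pr par Ph pgnum pgtys pnar)
    (hDP : GoodPDefs precP DP)
    (A : FSchema F ar C Fn far G gar Fh gnum gtys nar Pr par Ph pgnum pgtys pnar Empty)
    (σ : ℕ → ℕ) :
    ∃ Fo : F0Formula C Fn far G gar Pr par, FSEval D DI DP σ ∅ A Fo := by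
  have hNE : ∀ t : NTerm F ar, ∃ β, NEval D σ t β := NEval_total hwf D hD σ
  have hIT : ∀ h : Fh, ITot (G := G) (gar := gar) D DI σ h := ITot_all hwfI D DI hDI σ hNE
  have hPT : ∀ P : Ph, PTot (G := G) (gar := gar) D DI DP σ P :=
    PTot_all hwfP D DI DP hDP σ hNE hIT
  induction A with
  | fvar x => exact x.elim
  | atom P ts =>
      choose us hus using fun j => SEval_total D DI σ hNE hIT (ts j)
      exact ⟨_, .atom ∅ P ts us hus⟩
  | datom P Xs hty ns =>
      choose ν hν using fun j => hNE (ns j)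
      exact hPT P (ν (Fin.last (pnar P))) (fun i => ν i.castSucc) Xs hty ns
        (fun i => hν i.castSucc) (hν (Fin.last (pnar P)))
  | not A ih =>
      obtain ⟨Fo, h⟩ := ih
      exact ⟨_, .not ∅ _ _ h⟩
  | and A B ihA ihB =>
      obtain ⟨Fo, hA⟩ := ihA
      obtain ⟨Go, hB⟩ := ihB
      exact ⟨_, .and ∅ _ _ _ _ hA hB⟩
  | or A B ihA ihB =>
      obtain ⟨Fo, hA⟩ := ihA
      obtain ⟨Go, hB⟩ := ihB
      exact ⟨_, .or ∅ _ _ _ _ hA hB⟩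
end

section
/- Every rule of the calculus RPL₀ is sound: for each inference rule of RPL₀, any first-order structure that satisfies the universal closures of the premise sequents (a sequent Γ ⊢ Δ being read as the implication ⋀Γ → ⋁Δ) also satisfies the universal closure of the conclusion sequent. Consequently, if a sequent S is derivable in RPL₀ from axioms ⊢ F₁, …, ⊢ F_k, then every model of the universal closures ∀F₁, …, ∀F_k satisfies the universal closure of S. -/
namespace RPL0

/-- First-order terms over variables `V` and function symbols `Fn` with arities `far`. -/
inductive Tm (V : Type) (Fn : Type) (far : Fn → ℕ) : Type where
  | var : V → Tm V Fn far
  | app : (f : Fn) → (Fin (far f) → Tm V Fn far) → Tm V Fn far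

variable {V Fn Pr : Type} {far : Fn → ℕ} {par : Pr → ℕ}

def Tm.subst (θ : V → Tm V Fn far) : Tm V Fn far → Tm V Fn far
  | .var v => θ v
  | .app f ts => .app f fun i => (ts i).subst θ

def Tm.HasVar (v : V) : Tm V Fn far → Prop
  | .var w => w = v
  | .app _ ts => ∃ i, (ts i).HasVar v

/-- Quantifier-free first-order formulas `PL₀` over predicate symbols `Pr` with arities `par`. -/
inductive Fm (V : Type) (Fn : Type) (far : Fn → ℕ) (Pr : Type) (par : Pr → ℕ) : Type where
  | atom : (P : Pr) → (Fin (par P) → Tm V Fn far) → Fm V Fn far Pr par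
  | not : Fm V Fn far Pr par → Fm V Fn far Pr par
  | and : Fm V Fn far Pr par → Fm V Fn far Pr par → Fm V Fn far Pr par
  | or : Fm V Fn far Pr par → Fm V Fn far Pr par → Fm V Fn far Pr par

def Fm.subst (θ : V → Tm V Fn far) : Fm V Fn far Pr par → Fm V Fn far Pr par
  | .atom P ts => .atom P fun i => (ts i).subst θ
  | .not A => .not (A.subst θ)
  | .and A B => .and (A.subst θ) (B.subst θ)
  | .or A B => .or (A.subst θ) (B.subst θ)

def Fm.HasVar (v : V) : Fm V Fn far Pr par → Prop
  | .atom _ ts => ∃ i, (ts i).HasVar v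
  | .not A => A.HasVar v
  | .and A B => A.HasVar v ∨ B.HasVar v
  | .or A B => A.HasVar v ∨ B.HasVar v

/-- `θ` unifies the set (multiset) of formulas `S`. -/
def Unifies (θ : V → Tm V Fn far) (S : Multiset (Fm V Fn far Pr par)) : Prop :=
  ∀ A ∈ S, ∀ B ∈ S, Fm.subst θ A = Fm.subst θ B

/-- `θ` is a most general unifier of the formulas in `S`. -/
def IsMGU (θ : V → Tm V Fn far) (S : Multiset (Fm V Fn far Pr par)) : Prop :=
  Unifies θ S ∧ ∀ θ' : V → Tm V Fn far, Unifies θ' S →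
    ∃ η : V → Tm V Fn far, ∀ v, (θ v).subst η = θ' v

/-- Derivability in the calculus `RPL₀` from axioms `⊢ F` for `F ∈ Ax`.
Sequents are pairs of multisets of `PL₀`-formulas. -/
inductive Der (Ax : Set (Fm V Fn far Pr par)) :
    Multiset (Fm V Fn far Pr par) → Multiset (Fm V Fn far Pr par) → Prop where
  | ax {A : Fm V Fn far Pr par} : A ∈ Ax → Der Ax 0 {A}
  | andr1 {Γ Δ : Multiset (Fm V Fn far Pr par)} {A B : Fm V Fn far Pr par} :
      Der Ax Γ (A.and B ::ₘ Δ) → Der Ax Γ (A ::ₘ Δ)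
  | andr2 {Γ Δ : Multiset (Fm V Fn far Pr par)} {A B : Fm V Fn far Pr par} :
      Der Ax Γ (A.and B ::ₘ Δ) → Der Ax Γ (B ::ₘ Δ)
  | andl {Γ Δ : Multiset (Fm V Fn far Pr par)} {A B : Fm V Fn far Pr par} :
      Der Ax (A.and B ::ₘ Γ) Δ → Der Ax (A ::ₘ B ::ₘ Γ) Δ
  | orr {Γ Δ : Multiset (Fm V Fn far Pr par)} {A B : Fm V Fn far Pr par} :
      Der Ax Γ (A.or B ::ₘ Δ) → Der Ax Γ (A ::ₘ B ::ₘ Δ)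
  | orl1 {Γ Δ : Multiset (Fm V Fn far Pr par)} {A B : Fm V Fn far Pr par} :
      Der Ax (A.or B ::ₘ Γ) Δ → Der Ax (A ::ₘ Γ) Δ
  | orl2 {Γ Δ : Multiset (Fm V Fn far Pr par)} {A B : Fm V Fn far Pr par} :
      Der Ax (A.or B ::ₘ Γ) Δ → Der Ax (B ::ₘ Γ) Δ
  | negr {Γ Δ : Multiset (Fm V Fn far Pr par)} {A : Fm V Fn far Pr par} :
      Der Ax Γ (A.not ::ₘ Δ) → Der Ax (A ::ₘ Γ) Δ
  | negl {Γ Δ : Multiset (Fm V Fn far Pr par)} {A : Fm V Fn far Pr par} :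
      Der Ax (A.not ::ₘ Γ) Δ → Der Ax Γ (A ::ₘ Δ)
  | res {Γ Δ Γ₂ Λ : Multiset (Fm V Fn far Pr par)} (As Bs : Multiset (Fm V Fn far Pr par))
      (θ : V → Tm V Fn far) :
      As ≠ 0 → Bs ≠ 0 →
      (∀ v : V, (∃ A ∈ As, Fm.HasVar v A) → ¬ ∃ B ∈ Bs, Fm.HasVar v B) →
      IsMGU θ (As + Bs) →
      Der Ax Γ (Δ + As) → Der Ax (Bs + Γ₂) Λ →
      Der Ax (Γ.map (Fm.subst θ) + Γ₂.map (Fm.subst θ)) (Δ.map (Fm.subst θ) + Λ.map (Fm.subst θ))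

variable {α : Type}

def Tm.eval (fI : (f : Fn) → (Fin (far f) → α) → α) (v : V → α) : Tm V Fn far → α
  | .var x => v x
  | .app f ts => fI f fun i => (ts i).eval fI v

def Fm.truth (fI : (f : Fn) → (Fin (far f) → α) → α)
    (pI : (P : Pr) → (Fin (par P) → α) → Prop) (v : V → α) : Fm V Fn far Pr par → Prop
  | .atom P ts => pI P fun i => (ts i).eval fI v
  | .not A => ¬ A.truth fI pI v
  | .and A B => A.truth fI pI v ∧ B.truth fI pI v
  | .or A B => A.truth fI pI v ∨ B.truth fI pI v

/-- A structure satisfies the universal closure of the sequent `Γ ⊢ Δ`,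
read as the implication `⋀Γ → ⋁Δ`. -/
def SeqHolds (fI : (f : Fn) → (Fin (far f) → α) → α)
    (pI : (P : Pr) → (Fin (par P) → α) → Prop)
    (Γ Δ : Multiset (Fm V Fn far Pr par)) : Prop :=
  ∀ v : V → α, (∀ A ∈ Γ, Fm.truth fI pI v A) → ∃ B ∈ Δ, Fm.truth fI pI v B


theorem Tm.eval_subst {V Fn : Type} {far : Fn → ℕ} {α : Type}
    (fI : (f : Fn) → (Fin (far f) → α) → α) (v : V → α) (θ : V → Tm V Fn far)
    (t : Tm V Fn far) :
    (t.subst θ).eval fI v = t.eval fI (fun x => (θ x).eval fI v) := by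
  induction t with
  | var x => rfl
  | app f ts ih => simp only [Tm.subst, Tm.eval]; congr 1; funext i; exact ih i

theorem Fm.truth_subst {V Fn Pr : Type} {far : Fn → ℕ} {par : Pr → ℕ} {α : Type}
    (fI : (f : Fn) → (Fin (far f) → α) → α) (pI : (P : Pr) → (Fin (par P) → α) → Prop)
    (v : V → α) (θ : V → Tm V Fn far) (A : Fm V Fn far Pr par) :
    (A.subst θ).truth fI pI v ↔ A.truth fI pI (fun x => (θ x).eval fI v) := by
  induction A with
  | atom P ts =>
      simp only [Fm.subst, Fm.truth]
      constructor <;> · intro h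
                        have : (fun i => (ts i).eval fI (fun x => (θ x).eval fI v))
                             = fun i => Tm.eval fI v (Tm.subst θ (ts i)) := by
                          funext i; rw [Tm.eval_subst]
                        simpa [this] using h
  | not A ih => simp only [Fm.subst, Fm.truth, ih]
  | and A B ihA ihB => simp only [Fm.subst, Fm.truth, ihA, ihB]
  | or A B ihA ihB => simp only [Fm.subst, Fm.truth, ihA, ihB]

end RPL0

open RPL0

/-- Soundness of `RPL₀`: if a sequent `S = Γ ⊢ Δ` is derivable in `RPL₀` from
axioms `⊢ F` with `F ∈ Ax`, then every first-order structure satisfying the universal closures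
of all axioms satisfies the universal closure of `S` (a sequent being read as `⋀Γ → ⋁Δ`).
In particular every rule of `RPL₀` preserves validity in such a structure. -/
theorem statement10 (V Fn Pr : Type) (far : Fn → ℕ) (par : Pr → ℕ)
    (Ax : Set (Fm V Fn far Pr par)) (Γ Δ : Multiset (Fm V Fn far Pr par))
    (hder : Der Ax Γ Δ) (α : Type) (hα : Nonempty α)
    (fI : (f : Fn) → (Fin (far f) → α) → α) (pI : (P : Pr) → (Fin (par P) → α) → Prop)
    (hAx : ∀ A ∈ Ax, ∀ v : V → α, Fm.truth fI pI v A) :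
    SeqHolds fI pI Γ Δ   := by
  induction hder with
  | @ax A hA =>
      intro v _
      exact ⟨A, Multiset.mem_singleton_self A, hAx A hA v⟩
  | @andr1 Γ Δ A B _ ih =>
      intro v hΓ
      obtain ⟨C, hC, hCt⟩ := ih v hΓ
      rw [Multiset.mem_cons] at hC
      rcases hC with rfl | hC
      · exact ⟨A, Multiset.mem_cons_self _ _, hCt.1⟩
      · exact ⟨C, Multiset.mem_cons_of_mem hC, hCt⟩
  | @andr2 Γ Δ A B _ ih =>
      intro v hΓ
      obtain ⟨C, hC, hCt⟩ := ih v hΓ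
      rw [Multiset.mem_cons] at hC
      rcases hC with rfl | hC
      · exact ⟨B, Multiset.mem_cons_self _ _, hCt.2⟩
      · exact ⟨C, Multiset.mem_cons_of_mem hC, hCt⟩
  | @andl Γ Δ A B _ ih =>
      intro v hΓ
      apply ih v
      intro C hC
      rw [Multiset.mem_cons] at hC
      rcases hC with rfl | hC
      · exact ⟨hΓ A (Multiset.mem_cons_self _ _),
          hΓ B (Multiset.mem_cons_of_mem (Multiset.mem_cons_self _ _))⟩
      · exact hΓ C (Multiset.mem_cons_of_mem (Multiset.mem_cons_of_mem hC))
  | @orr Γ Δ A B _ ih =>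
      intro v hΓ
      obtain ⟨C, hC, hCt⟩ := ih v hΓ
      rw [Multiset.mem_cons] at hC
      rcases hC with rfl | hC
      · rcases hCt with h | h
        · exact ⟨A, Multiset.mem_cons_self _ _, h⟩
        · exact ⟨B, Multiset.mem_cons_of_mem (Multiset.mem_cons_self _ _), h⟩
      · exact ⟨C, Multiset.mem_cons_of_mem (Multiset.mem_cons_of_mem hC), hCt⟩
  | @orl1 Γ Δ A B _ ih =>
      intro v hΓ
      apply ih v
      intro C hC
      rw [Multiset.mem_cons] at hC
      rcases hC with rfl | hC
      · exact Or.inl (hΓ A (Multiset.mem_cons_self _ _))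
      · exact hΓ C (Multiset.mem_cons_of_mem hC)
  | @orl2 Γ Δ A B _ ih =>
      intro v hΓ
      apply ih v
      intro C hC
      rw [Multiset.mem_cons] at hC
      rcases hC with rfl | hC
      · exact Or.inr (hΓ B (Multiset.mem_cons_self _ _))
      · exact hΓ C (Multiset.mem_cons_of_mem hC)
  | @negr Γ Δ A _ ih =>
      intro v hΓ
      obtain ⟨C, hC, hCt⟩ := ih v (fun C hC => hΓ C (Multiset.mem_cons_of_mem hC))
      rw [Multiset.mem_cons] at hC
      rcases hC with rfl | hC
      · exact absurd (hΓ A (Multiset.mem_cons_self _ _)) hCt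
      · exact ⟨C, hC, hCt⟩
  | @negl Γ Δ A _ ih =>
      intro v hΓ
      by_cases hA : A.truth fI pI v
      · exact ⟨A, Multiset.mem_cons_self _ _, hA⟩
      · have hprem : ∀ C ∈ Fm.not A ::ₘ Γ, Fm.truth fI pI v C := by
          intro C hC
          rw [Multiset.mem_cons] at hC
          rcases hC with rfl | hC
          · exact hA
          · exact hΓ C hC
        obtain ⟨C, hC, hCt⟩ := ih v hprem
        exact ⟨C, Multiset.mem_cons_of_mem hC, hCt⟩
  | @res Γ Δ Γ₂ Λ As Bs θ hAs hBs _ hmgu _ _ ih1 ih2 =>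
      intro v hΓ
      set v' : V → α := fun x => (θ x).eval fI v with hv'
      have hsub : ∀ C : Fm V Fn far Pr par,
          (C.subst θ).truth fI pI v ↔ C.truth fI pI v' :=
        fun C => Fm.truth_subst fI pI v θ C
      have hΓ' : ∀ C ∈ Γ, C.truth fI pI v' := fun C hC =>
        (hsub C).mp (hΓ _ (Multiset.mem_add.mpr (Or.inl (Multiset.mem_map_of_mem _ hC))))
      have hΓ₂' : ∀ C ∈ Γ₂, C.truth fI pI v' := fun C hC =>
        (hsub C).mp (hΓ _ (Multiset.mem_add.mpr (Or.inr (Multiset.mem_map_of_mem _ hC))))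
      obtain ⟨C, hC, hCt⟩ := ih1 v' hΓ'
      rw [Multiset.mem_add] at hC
      rcases hC with hC | hC
      · exact ⟨C.subst θ, Multiset.mem_add.mpr (Or.inl (Multiset.mem_map_of_mem _ hC)),
          (hsub C).mpr hCt⟩
      · -- C ∈ As is true under v'; all of Bs agree with C after θ
        have hBst : ∀ B ∈ Bs, B.truth fI pI v' := by
          intro B hB
          have heq : Fm.subst θ C = Fm.subst θ B :=
            hmgu.1 C (Multiset.mem_add.mpr (Or.inl hC)) B (Multiset.mem_add.mpr (Or.inr hB))
          have := ((hsub C).mpr hCt)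
          rw [heq] at this
          exact (hsub B).mp this
        have hprem : ∀ E ∈ Bs + Γ₂, Fm.truth fI pI v' E := by
          intro E hE
          rw [Multiset.mem_add] at hE
          rcases hE with hE | hE
          · exact hBst E hE
          · exact hΓ₂' E hE
        obtain ⟨D, hD, hDt⟩ := ih2 v' hprem
        exact ⟨D.subst θ, Multiset.mem_add.mpr (Or.inr (Multiset.mem_map_of_mem _ hD)),
          (hsub D).mpr hDt⟩
end

section
/- Let G be a finite call graph over the junction network J*(Af), let P ∈ G be a flow defined over a partition 𝒮* of the parameter assignments, and let σ be a parameter assignment. Then the trace T(G,P,σ) of σ at P in G is a finite tree; i.e., the corecursive definition of the trace unfolds only finitely often. -/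
namespace Schematic

variable {F : Type} {ar : F → ℕ}

/-- Evaluation of numeric terms under a parameter assignment `σ`, relative to an
interpretation `I` of the defined numeric function symbols. -/
def NTerm.evalI (I : (f : F) → (Fin (ar f + 1) → ℕ) → ℕ) (σ : ℕ → ℕ) : NTerm F ar → ℕ
  | .zero => 0
  | .param n => σ n
  | .succ t => t.evalI I σ + 1
  | .defd f ts => I f fun i => (ts i).evalI I σ

/-- `I` interprets the defined numeric symbols according to their primitive-recursive
defining equations `D(F̂_ω)`; then `NTerm.evalI I σ t` computes the unique normal form
`σ(t)↓_ω`. -/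
def SatNumDefs (D : NumDefs F ar) (I : (f : F) → (Fin (ar f + 1) → ℕ) → ℕ) : Prop :=
  ∀ (f : F) (as : Fin (ar f) → ℕ),
    (I f (Fin.snoc as 0) =
      NTerm.evalI I (fun _ => 0)
        ((D.base f).subst (cutSub (ar f) fun i => NTerm.ofNat F ar (as i)))) ∧
    ∀ p : ℕ, I f (Fin.snoc as (p + 1)) =
      NTerm.evalI I (fun _ => 0)
        ((D.step f).subst (stepSub (ar f) (fun i => NTerm.ofNat F ar (as i))
          (NTerm.ofNat F ar p)
          (NTerm.defd f (Fin.snoc (fun i => NTerm.ofNat F ar (as i)) (NTerm.ofNat F ar p)))))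

/-- An `Af`-junction: a pair of a symbol `δ ∈ Δ` and a point, i.e. a tuple of numeric terms
of length `Af δ`. -/
structure Junc (Dl : Type) (Af : Dl → ℕ) (F : Type) (ar : F → ℕ) where
  δ : Dl
  pt : Fin (Af δ) → NTerm F ar

/-- The evaluation `σ(j)↓_ω` of a junction: the symbol together with the evaluated point. -/
def evalJ {Dl : Type} {Af : Dl → ℕ} (I : (f : F) → (Fin (ar f + 1) → ℕ) → ℕ) (σ : ℕ → ℕ)
    (j : Junc Dl Af F ar) : Σ δ : Dl, Fin (Af δ) → ℕ :=
  ⟨j.δ, fun i => (j.pt i).evalI I σ⟩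

/-- The network order `≺^S` relative to a set `S` of parameter assignments: `q ≺^S j` iff
either `q` and `j` have equal arities and the evaluated point of `q` is `≺_{Af}`-below that
of `j` for every `σ ∈ S`, or the arity of `q` is strictly larger than that of `j`. -/
def NetLt {Dl : Type} {Af : Dl → ℕ}
    (precm : (m : ℕ) → (Fin m → ℕ) → (Fin m → ℕ) → Prop)
    (I : (f : F) → (Fin (ar f + 1) → ℕ) → ℕ) (S : Set (ℕ → ℕ))
    (q j : Junc Dl Af F ar) : Prop :=
  (∃ h : Af q.δ = Af j.δ, ∀ σ ∈ S,
      precm (Af j.δ) (fun i => (q.pt (Fin.cast h.symm i)).evalI I σ)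
        (fun i => (j.pt i).evalI I σ)) ∨
  Af j.δ < Af q.δ

/-- A flow over the junction network `J*(Af)`: an injective map from a partition of the set
of parameter assignments into mutually disjoint sets to finite sets of junctions, with a
unique source junction contained in every value, all other junctions of a value being
`≺^S`-below the source. -/
structure Flow (Dl : Type) (Af : Dl → ℕ) (F : Type) (ar : F → ℕ)
    (precm : (m : ℕ) → (Fin m → ℕ) → (Fin m → ℕ) → Prop)
    (I : (f : F) → (Fin (ar f + 1) → ℕ) → ℕ) where
  part : Set (Set (ℕ → ℕ))
  val : Set (ℕ → ℕ) → Finset (Junc Dl Af F ar)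
  disj : ∀ S ∈ part, ∀ T ∈ part, S ≠ T → Disjoint S T
  cover : ∀ σ : ℕ → ℕ, ∃ S ∈ part, σ ∈ S
  inj : ∀ S ∈ part, ∀ T ∈ part, val S = val T → S = T
  src : Junc Dl Af F ar
  src_mem : ∀ S ∈ part, src ∈ val S
  src_uniq : ∀ j : Junc Dl Af F ar, (∀ S ∈ part, j ∈ val S) → j = src
  desc : ∀ S ∈ part, ∀ q ∈ val S, q = src ∨ NetLt precm I S q src

/-- `CG` is a call graph: for every flow `P ∈ CG`, every class `S` of its partition, every
`σ ∈ S` and every junction `j ∈ P(S)` there are a unique flow `P' ∈ CG` and a parameter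
assignment `θ` with `θ([P'])↓_ω = σ(j)↓_ω`. -/
def IsCallGraph {Dl : Type} {Af : Dl → ℕ}
    {precm : (m : ℕ) → (Fin m → ℕ) → (Fin m → ℕ) → Prop}
    {I : (f : F) → (Fin (ar f + 1) → ℕ) → ℕ}
    (CG : Finset (Flow Dl Af F ar precm I)) : Prop :=
  ∀ P ∈ CG, ∀ S ∈ P.part, ∀ σ ∈ S, ∀ j ∈ P.val S,
    ∃! P' : Flow Dl Af F ar precm I,
      P' ∈ CG ∧ ∃ θ : ℕ → ℕ, evalJ I θ P'.src = evalJ I σ j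

/-- One unfolding step of the trace computation: from the pair `(P,σ)` pass, for some
non-source junction `j` of the value of the partition class of `σ`, to a pair
`(flow(j,σ), subst(j,σ))`. -/
def NextStep {Dl : Type} {Af : Dl → ℕ}
    {precm : (m : ℕ) → (Fin m → ℕ) → (Fin m → ℕ) → Prop}
    {I : (f : F) → (Fin (ar f + 1) → ℕ) → ℕ}
    (CG : Finset (Flow Dl Af F ar precm I))
    (x y : Flow Dl Af F ar precm I × (ℕ → ℕ)) : Prop :=
  y.1 ∈ CG ∧ ∃ S ∈ x.1.part, x.2 ∈ S ∧ ∃ j ∈ x.1.val S, j ≠ x.1.src ∧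
    evalJ I y.2 y.1.src = evalJ I x.2 j

end Schematic

open Schematic

/-- Let `G` be a finite call graph over the junction network `J*(Af)`, let
`P ∈ G` be a flow and `σ` a parameter assignment.  Then the trace `T(G,P,σ)` of `σ` at `P`
in `G` is a finite tree: since the branching of the trace is finite, this is expressed by
saying that the corecursive definition of the trace unfolds only finitely often, i.e. there
is no infinite sequence of unfolding steps starting at `(P,σ)`. -/
theorem statement16 (F : Type) (ar : F → ℕ) (prec : F → F → Prop)
    (hirr : ∀ f, ¬ prec f f) (htrans : Transitive prec) (hwf : WellFounded prec)
    (D : NumDefs F ar) (hD : GoodNumDefs prec D)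
    (I : (f : F) → (Fin (ar f + 1) → ℕ) → ℕ) (hI : SatNumDefs D I)
    (Dl : Type) (Af : Dl → ℕ)
    (precm : (m : ℕ) → (Fin m → ℕ) → (Fin m → ℕ) → Prop)
    (htransm : ∀ m, Transitive (precm m)) (hirrm : ∀ m p, ¬ precm m p p)
    (hwfm : ∀ m, WellFounded (precm m))
    (htotm : ∀ m p q, precm m p q ∨ p = q ∨ precm m q p)
    (CG : Finset (Flow Dl Af F ar precm I)) (hCG : IsCallGraph CG)
    (P : Flow Dl Af F ar precm I) (hP : P ∈ CG) (σ : ℕ → ℕ) :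
    ¬ ∃ f : ℕ → Flow Dl Af F ar precm I × (ℕ → ℕ),
        f 0 = (P, σ) ∧ ∀ k, NextStep CG (f k) (f (k + 1)) := by

  rintro ⟨f, hf0, hstep⟩
  have hmem : ∀ k, (f k).1 ∈ CG := by
    intro k
    induction k with
    | zero => rw [hf0]; exact hP
    | succ k _ => exact (hstep k).1
  set N := CG.sup fun Q => Af Q.src.δ with hN
  have hbound : ∀ k, Af (f k).1.src.δ ≤ N := fun k =>
    Finset.le_sup (f := fun Q => Af Q.src.δ) (hmem k)
  let r : ℕ → ℕ → Prop := fun a b => N - a < N - b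
  let s : ∀ m : ℕ, (Fin m → ℕ) → (Fin m → ℕ) → Prop := fun m => precm m
  have hlex : WellFounded (PSigma.Lex r s) :=
    WellFounded.psigma_lex (InvImage.wf (fun a => N - a) Nat.lt_wfRel.wf) hwfm
  let g : ℕ → (m : ℕ) ×' (Fin m → ℕ) := fun k =>
    ⟨Af (f k).1.src.δ, fun i => ((f k).1.src.pt i).evalI I (f k).2⟩
  have hcast : ∀ (m n : ℕ) (h : m = n) (w : Fin m → ℕ),
      (⟨m, w⟩ : (a : ℕ) ×' (Fin a → ℕ)) = ⟨n, fun i => w (Fin.cast h.symm i)⟩ := by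
    intro m n h w
    subst h
    rfl
  have hdesc : ∀ k, PSigma.Lex r s (g (k + 1)) (g k) := by
    intro k
    obtain ⟨_, S, hS, hσS, j, hj, hjne, heq⟩ := hstep k
    have hnet := ((f k).1.desc S hS j hj).resolve_left hjne
    have hg1 : g (k + 1) = ⟨Af j.δ, fun i => (j.pt i).evalI I (f k).2⟩ := by
      have h1 := congrArg (fun e : Σ δ : Dl, Fin (Af δ) → ℕ =>
        ((⟨Af e.1, e.2⟩ : (m : ℕ) ×' (Fin m → ℕ)))) heq
      simpa [evalJ, g] using h1
    have hjN : Af j.δ ≤ N := by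
      have h2 := congrArg (fun x : (m : ℕ) ×' (Fin m → ℕ) => x.1) hg1
      have h3 := hbound (k + 1)
      simp only [g] at h2
      omega
    rw [hg1]
    rcases hnet with ⟨h, hpre⟩ | hlt
    · rw [hcast (Af j.δ) (Af (f k).1.src.δ) h (fun i => (j.pt i).evalI I (f k).2)]
      exact PSigma.Lex.right _ (hpre (f k).2 hσS)
    · exact PSigma.Lex.left _ _ (show N - Af j.δ < N - Af (f k).1.src.δ by omega)
  have key : ∀ x : (m : ℕ) ×' (Fin m → ℕ), ∀ k, g k ≠ x := by
    refine fun x => hlex.induction (C := fun x => ∀ k, g k ≠ x) x ?_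
    intro x ih k hk
    exact ih (g (k + 1)) (hk ▸ hdesc k) (k + 1) rfl
  exact key (g 0) 0 rfl
end

section
/- For all natural numbers n and m, the following set of first-order sentences is unsatisfiable: { ∀y ∀z, P(g^m(y), z) } ∪ { ∀x₀ ⋯ ∀x_n, ¬P(x₀, a) ∨ ¬P(x₁, g(a)) ∨ ⋯ ∨ ¬P(x_n, g^n(a)) }, where g^i denotes i-fold application of g. -/
/-- For all natural numbers `n` and `m`, the set of first-order sentences
`{ ∀y ∀z, P(gᵐ(y), z) } ∪ { ∀x₀ ⋯ ∀x_n, ¬P(x₀,a) ∨ ¬P(x₁,g(a)) ∨ ⋯ ∨ ¬P(x_n, gⁿ(a)) }`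
(in the language with a constant `a`, a unary function `g` and a binary predicate `P`)
is unsatisfiable: there is no structure interpreting `a`, `g`, `P` satisfying both sentences. -/
theorem statement17 (n m : ℕ) :
    ¬ ∃ (α : Type) (_ : Nonempty α) (Pi : α → α → Prop) (gi : α → α) (ai : α),
        (∀ y z : α, Pi (gi^[m] y) z) ∧
        (∀ x : Fin (n + 1) → α, ∃ i : Fin (n + 1), ¬ Pi (x i) (gi^[(i : ℕ)] ai)) := by
  rintro ⟨α, _, Pi, gi, ai, h1, h2⟩
  obtain ⟨i, hi⟩ := h2 (fun _ => gi^[m] ai)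
  exact hi (h1 ai _)
end
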